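/- arXiv:2303.16587 — 5 statements merged into one kernel-verified Lean document; each statement's English description precedes it below -/
import Mathlib

section
/- Let φ be a weak Φ-function on ℝⁿ satisfying (aDec). If f ∈ L^φ(ℝⁿ), then for every ε > 0 there exists R > 0 such that ‖f‖_{φ, ℝⁿ \ B(0,R)} < ε. -/
open MeasureTheory Metric Filter Topology Set ENNReal

noncomputable section

def AInc {α : Type*} [MeasurableSpace α] (μ : Measure α) (φ : α → ℝ → ℝ≥0∞) (p a : ℝ) : Prop :=
  1 ≤ a ∧ ∀ᵐ x ∂μ, ∀ s t : ℝ, 0 < s → s < t →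
    φ x s / ENNReal.ofReal (s ^ p) ≤ ENNReal.ofReal a * (φ x t / ENNReal.ofReal (t ^ p))

def ADec {α : Type*} [MeasurableSpace α] (μ : Measure α) (φ : α → ℝ → ℝ≥0∞) (q a : ℝ) : Prop :=
  1 ≤ a ∧ ∀ᵐ x ∂μ, ∀ s t : ℝ, 0 < s → s < t →
    φ x t / ENNReal.ofReal (t ^ q) ≤ ENNReal.ofReal a * (φ x s / ENNReal.ofReal (s ^ q))

def IsPhiPrefunction {α : Type*} [MeasurableSpace α] (μ : Measure α) (φ : α → ℝ → ℝ≥0∞) : Prop :=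
  (∀ᵐ x ∂μ, φ x 0 = 0 ∧ MonotoneOn (φ x) (Ici 0) ∧
      Tendsto (φ x) (𝓝[>] 0) (𝓝 0) ∧ Tendsto (φ x) atTop (𝓝 ∞)) ∧
  ∀ f : α → ℝ, Measurable f → Measurable fun x => φ x |f x|

def IsWeakPhi {α : Type*} [MeasurableSpace α] (μ : Measure α) (φ : α → ℝ → ℝ≥0∞) : Prop :=
  IsPhiPrefunction μ φ ∧ ∃ a : ℝ, AInc μ φ 1 a

def phiModular {α : Type*} [MeasurableSpace α] (μ : Measure α) (φ : α → ℝ → ℝ≥0∞)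
    (f : α → ℝ) : ℝ≥0∞ :=
  ∫⁻ x, φ x |f x| ∂μ

def phiNorm {α : Type*} [MeasurableSpace α] (μ : Measure α) (φ : α → ℝ → ℝ≥0∞)
    (f : α → ℝ) : ℝ :=
  sInf {l : ℝ | 0 < l ∧ phiModular μ φ (fun x => f x / l) ≤ 1}

def MemLphi {α : Type*} [MeasurableSpace α] (μ : Measure α) (φ : α → ℝ → ℝ≥0∞)
    (f : α → ℝ) : Prop :=
  Measurable f ∧ ∃ l : ℝ, 0 < l ∧ phiModular μ φ (fun x => l * f x) < ∞

def A0 {α : Type*} [MeasurableSpace α] (μ : Measure α) (φ : α → ℝ → ℝ≥0∞) : Prop :=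
  ∃ β : ℝ, 0 < β ∧ β ≤ 1 ∧ ∀ᵐ x ∂μ, φ x β ≤ 1 ∧ 1 ≤ φ x (1 / β)

def phiInv {α : Type*} (φ : α → ℝ → ℝ≥0∞) (x : α) (t : ℝ≥0∞) : ℝ :=
  sInf {s : ℝ | 0 ≤ s ∧ t ≤ φ x s}

variable {n : ℕ}

def A1 (φ : EuclideanSpace ℝ (Fin n) → ℝ → ℝ≥0∞) : Prop :=
  ∃ β : ℝ, 0 < β ∧ β < 1 ∧ ∀ z : EuclideanSpace ℝ (Fin n), ∀ r : ℝ, 0 < r →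
    volume (ball z r) ≤ 1 →
    ∀ t : ℝ≥0∞, 1 ≤ t → t ≤ (volume (ball z r))⁻¹ →
    ∀ᵐ x ∂(volume.restrict (ball z r)), ∀ᵐ y ∂(volume.restrict (ball z r)),
      β * phiInv φ x t ≤ phiInv φ y t

def A2 (φ : EuclideanSpace ℝ (Fin n) → ℝ → ℝ≥0∞) : Prop :=
  ∀ s : ℝ, 0 < s → ∃ β : ℝ, 0 < β ∧ β ≤ 1 ∧ ∃ h : EuclideanSpace ℝ (Fin n) → ℝ,
    Integrable h volume ∧ (∃ C : ℝ, ∀ x, |h x| ≤ C) ∧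
    ∀ᵐ x ∂(volume : Measure (EuclideanSpace ℝ (Fin n))), ∀ᵐ y ∂(volume : Measure (EuclideanSpace ℝ (Fin n))),
      ∀ t : ℝ≥0∞, ENNReal.ofReal (h x + h y) ≤ t → t ≤ ENNReal.ofReal s →
      β * phiInv φ x t ≤ phiInv φ y t

def maxFun (f : EuclideanSpace ℝ (Fin n) → ℝ) (x : EuclideanSpace ℝ (Fin n)) : ℝ :=
  ⨆ r : {r : ℝ // 0 < r}, ⨍ y in ball x r.1, |f y|

def RSet (f : EuclideanSpace ℝ (Fin n) → ℝ) (x : EuclideanSpace ℝ (Fin n)) : Set ℝ :=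
  {r | 0 ≤ r ∧ ∃ rk : ℕ → ℝ, (∀ k, 0 < rk k) ∧ Tendsto rk atTop (𝓝 r) ∧
    Tendsto (fun k => ⨍ y in ball x (rk k), |f y|) atTop (𝓝 (maxFun f x))}

def HasWeakDeriv (f g : EuclideanSpace ℝ (Fin n) → ℝ) (i : Fin n) : Prop :=
  LocallyIntegrable f volume ∧ LocallyIntegrable g volume ∧
  ∀ ψ : EuclideanSpace ℝ (Fin n) → ℝ, ContDiff ℝ (⊤ : ℕ∞) ψ → HasCompactSupport ψ →
    ∫ x, f x * fderiv ℝ ψ x (EuclideanSpace.single i 1) = - ∫ x, g x * ψ x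

def MemW1phi (φ : EuclideanSpace ℝ (Fin n) → ℝ → ℝ≥0∞) (f : EuclideanSpace ℝ (Fin n) → ℝ) : Prop :=
  MemLphi volume φ f ∧ ∀ i : Fin n, ∃ g, HasWeakDeriv f g i ∧ MemLphi volume φ g

theorem stmt1 {n : ℕ} (φ : EuclideanSpace ℝ (Fin n) → ℝ → ℝ≥0∞)
    (hφ : IsWeakPhi volume φ) (q a : ℝ) (hq : 1 < q) (hdec : ADec volume φ q a)
    (f : EuclideanSpace ℝ (Fin n) → ℝ) (hf : MemLphi volume φ f)
    (ε : ℝ) (hε : 0 < ε) :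
    ∃ R : ℝ, 0 < R ∧
      phiNorm (volume.restrict (ball (0 : EuclideanSpace ℝ (Fin n)) R)ᶜ) φ f < ε := by
  obtain ⟨hfm, l₀, hl₀, hmod⟩ := hf
  obtain ⟨ha1, hdec'⟩ := hdec
  obtain ⟨⟨hpre1, hpre2⟩, -⟩ := hφ
  set l : ℝ := min ε (1 / l₀) / 2 with hl_def
  have hmin : 0 < min ε (1 / l₀) := lt_min hε (by positivity)
  have hl0 : 0 < l := by positivity
  have hlε : l < ε :=
    lt_of_le_of_lt (by unfold l; gcongr; exact min_le_left _ _)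
      (half_lt_self hε)
  have hll₀ : l * l₀ < 1 := by
    have h1 : l < 1 / l₀ :=
      lt_of_le_of_lt (by unfold l; gcongr; exact min_le_right _ _)
        (half_lt_self (by positivity))
    calc l * l₀ < (1 / l₀) * l₀ := by gcongr
    _ = 1 := by field_simp
  -- constant
  set c : ℝ := (1 / (l * l₀)) ^ q with hc_def
  have hc_pos : 0 < c := Real.rpow_pos_of_pos (by positivity) q
  set C : ℝ≥0∞ := ENNReal.ofReal a * ENNReal.ofReal c with hC_def
  have hC0 : C ≠ 0 := by
    rw [hC_def]
    exact mul_ne_zero (ENNReal.ofReal_pos.2 (by linarith)).ne' (ENNReal.ofReal_pos.2 hc_pos).ne'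
  have hCtop : C ≠ ∞ := by
    simp [hC_def, ENNReal.mul_ne_top, ENNReal.ofReal_ne_top]
  -- tail measure
  have hgm : Measurable (fun x => φ x |l₀ * f x|) := hpre2 _ (hfm.const_mul l₀)
  set ν := volume.withDensity (fun x => φ x |l₀ * f x|) with hν_def
  have hν_app : ∀ S : Set (EuclideanSpace ℝ (Fin n)), MeasurableSet S →
      ν S = ∫⁻ x in S, φ x |l₀ * f x| := fun S hS => withDensity_apply _ hS
  have hν_fin : ν univ ≠ ∞ := by
    rw [hν_app univ MeasurableSet.univ, Measure.restrict_univ]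
    exact hmod.ne
  have hempty : (⋂ k : ℕ, (ball (0 : EuclideanSpace ℝ (Fin n)) k)ᶜ) = ∅ := by
    ext x
    simp only [mem_iInter, mem_compl_iff, mem_ball, mem_empty_iff_false, iff_false, not_forall,
      not_not]
    obtain ⟨k, hk⟩ := exists_nat_gt (dist x (0 : EuclideanSpace ℝ (Fin n)))
    exact ⟨k, hk⟩
  have htend : Tendsto (fun k : ℕ => ν ((ball (0 : EuclideanSpace ℝ (Fin n)) k)ᶜ)) atTop (𝓝 0) := by
    have := tendsto_measure_iInter_atTop (μ := ν)
      (s := fun k : ℕ => (ball (0 : EuclideanSpace ℝ (Fin n)) k)ᶜ)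
      (fun k => measurableSet_ball.compl.nullMeasurableSet)
      (fun i j hij => compl_subset_compl.2 (ball_subset_ball (by exact_mod_cast hij)))
      ⟨0, by exact ne_top_of_le_ne_top hν_fin (measure_mono (subset_univ _))⟩
    rwa [hempty, measure_empty] at this
  obtain ⟨k, hk⟩ : ∃ k : ℕ, ν ((ball (0 : EuclideanSpace ℝ (Fin n)) k)ᶜ) < C⁻¹ := by
    have := (htend.eventually_lt_const (by simp [pos_iff_ne_zero, ENNReal.inv_ne_zero, hCtop] :
      (0:ℝ≥0∞) < C⁻¹)).exists
    exact this
  refine ⟨max k 1, by positivity, ?_⟩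
  set S : Set (EuclideanSpace ℝ (Fin n)) := (ball (0 : EuclideanSpace ℝ (Fin n)) (max k 1))ᶜ
  have hS : MeasurableSet S := measurableSet_ball.compl
  -- pointwise a.e. bound
  have h_ae : ∀ᵐ x ∂(volume : Measure (EuclideanSpace ℝ (Fin n))),
      φ x |f x / l| ≤ C * φ x |l₀ * f x| := by
    filter_upwards [hdec', hpre1] with x hd hp
    rcases eq_or_ne (f x) 0 with h0 | h0
    · simp [h0, abs_of_pos, hp.1]
    · have hfx : 0 < |f x| := abs_pos.2 h0
      set s : ℝ := l₀ * |f x| with hs_def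
      set t : ℝ := |f x| / l with ht_def
      have hs : 0 < s := by positivity
      have ht : 0 < t := by positivity
      have hst : s < t := by
        rw [hs_def, ht_def, lt_div_iff₀ hl0]
        calc l₀ * |f x| * l = (l * l₀) * |f x| := by ring
        _ < 1 * |f x| := by gcongr
        _ = |f x| := one_mul _
      have key := hd s t hs hst
      have hsq : (0:ℝ) < s ^ q := Real.rpow_pos_of_pos hs q
      have htq : (0:ℝ) < t ^ q := Real.rpow_pos_of_pos ht q
      have hts : t / s = 1 / (l * l₀) := by
        rw [ht_def, hs_def]; field_simp
      have htq_eq : t ^ q = c * s ^ q := by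
        rw [hc_def, ← hts, Real.div_rpow ht.le hs.le, div_mul_cancel₀ _ hsq.ne']
      have habs : |f x / l| = t := by
        rw [ht_def, abs_div, abs_of_pos hl0]
      have habs2 : |l₀ * f x| = s := by
        rw [hs_def, abs_mul, abs_of_pos hl₀]
      rw [habs, habs2]
      calc φ x t = φ x t / ENNReal.ofReal (t ^ q) * ENNReal.ofReal (t ^ q) :=
            (ENNReal.div_mul_cancel (by simpa using htq) ENNReal.ofReal_ne_top).symm
        _ ≤ ENNReal.ofReal a * (φ x s / ENNReal.ofReal (s ^ q)) * ENNReal.ofReal (t ^ q) := by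
            gcongr
        _ = ENNReal.ofReal a * ENNReal.ofReal c *
              (φ x s / ENNReal.ofReal (s ^ q) * ENNReal.ofReal (s ^ q)) := by
            rw [htq_eq, ENNReal.ofReal_mul hc_pos.le]; ring
        _ = C * φ x s := by
            rw [ENNReal.div_mul_cancel (by simpa using hsq) ENNReal.ofReal_ne_top, hC_def]
  -- modular bound
  have hbound : phiModular (volume.restrict S) φ (fun x => f x / l) ≤ 1 := by
    have h1 : phiModular (volume.restrict S) φ (fun x => f x / l)
        ≤ ∫⁻ x in S, C * φ x |l₀ * f x| := by
      refine lintegral_mono_ae (ae_restrict_of_ae h_ae)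
    have h2 : ∫⁻ x in S, C * φ x |l₀ * f x| = C * ν S := by
      rw [lintegral_const_mul _ hgm, hν_app S hS]
    have h3 : ν S ≤ ν ((ball (0 : EuclideanSpace ℝ (Fin n)) k)ᶜ) :=
      measure_mono (compl_subset_compl.2 (ball_subset_ball (le_max_left _ _)))
    calc phiModular (volume.restrict S) φ (fun x => f x / l)
        ≤ C * ν S := h2 ▸ h1
      _ ≤ C * C⁻¹ := by gcongr; exact (h3.trans_lt hk).le
      _ = 1 := ENNReal.mul_inv_cancel hC0 hCtop
  -- conclude
  have hmem : l ∈ {l' : ℝ | 0 < l' ∧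
      phiModular (volume.restrict S) φ (fun x => f x / l') ≤ 1} := ⟨hl0, hbound⟩
  have hle : phiNorm (volume.restrict S) φ f ≤ l :=
    csInf_le ⟨0, fun x hx => hx.1.le⟩ hmem
  exact hle.trans_lt hlε

end
end

section
/- Let φ be a weak Φ-function on ℝⁿ satisfying (aDec). If f ∈ L^φ(ℝⁿ), then for every ε > 0 there exists δ > 0 such that for every measurable set A ⊆ ℝⁿ with |A| < δ one has ‖f‖_{φ,A} < ε (absolute continuity of the Musielak–Orlicz quasi-norm). -/
open MeasureTheory Metric Filter Topology Set ENNReal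

noncomputable section

variable {n : ℕ}

theorem stmt2 {n : ℕ} (φ : EuclideanSpace ℝ (Fin n) → ℝ → ℝ≥0∞)
    (hφ : IsWeakPhi volume φ) (q a : ℝ) (hq : 1 < q) (hdec : ADec volume φ q a)
    (f : EuclideanSpace ℝ (Fin n) → ℝ) (hf : MemLphi volume φ f)
    (ε : ℝ) (hε : 0 < ε) :
    ∃ δ : ℝ, 0 < δ ∧ ∀ A : Set (EuclideanSpace ℝ (Fin n)), MeasurableSet A →
      volume A < ENNReal.ofReal δ → phiNorm (volume.restrict A) φ f < ε := by
  obtain ⟨l, hl, hfin⟩ := hf.2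
  have hc : (0:ℝ) < 2 / ε := by positivity
  set c : ℝ := 2 / ε with hcdef
  set C : ℝ≥0∞ := ENNReal.ofReal a * ENNReal.ofReal (max 1 ((c / l) ^ q)) with hCdef
  have hC1 : (1:ℝ≥0∞) ≤ C := by
    have h1 : (1:ℝ≥0∞) ≤ ENNReal.ofReal a := ENNReal.one_le_ofReal.2 hdec.1
    have h2 : (1:ℝ≥0∞) ≤ ENNReal.ofReal (max 1 ((c / l) ^ q)) :=
      ENNReal.one_le_ofReal.2 (le_max_left _ _)
    calc (1:ℝ≥0∞) = 1 * 1 := (one_mul 1).symm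
    _ ≤ C := mul_le_mul' h1 h2
  have hCtop : C ≠ ∞ := by
    simp [hCdef, ENNReal.mul_ne_top]
  -- pointwise a.e. bound
  have hbound : ∀ᵐ x ∂(volume : Measure (EuclideanSpace ℝ (Fin n))),
      φ x (c * |f x|) ≤ C * φ x (l * |f x|) := by
    filter_upwards [hφ.1.1, hdec.2] with x hx hdx
    obtain ⟨hx0, hxmono, -, -⟩ := hx
    rcases eq_or_lt_of_le (abs_nonneg (f x)) with h | h
    · rw [← h, mul_zero, mul_zero, hx0]
      exact zero_le
    set u := |f x| with hu
    rcases le_or_gt c l with hcl | hlc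
    · have h1 : φ x (c * u) ≤ φ x (l * u) :=
        hxmono (mem_Ici.2 (by positivity)) (mem_Ici.2 (by positivity))
          (mul_le_mul_of_nonneg_right hcl h.le)
      exact h1.trans (le_mul_of_one_le_left zero_le hC1)
    · have hs : 0 < l * u := mul_pos hl h
      have hst : l * u < c * u := mul_lt_mul_of_pos_right hlc h
      have hd := hdx (l * u) (c * u) hs hst
      have hT0 : ENNReal.ofReal ((c * u) ^ q) ≠ 0 :=
        (ENNReal.ofReal_pos.2 (Real.rpow_pos_of_pos (mul_pos hc h) q)).ne'
      have hTtop : ENNReal.ofReal ((c * u) ^ q) ≠ ∞ := ENNReal.ofReal_ne_top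
      have h2 : φ x (c * u) ≤
          ENNReal.ofReal a * (φ x (l * u) / ENNReal.ofReal ((l * u) ^ q)) *
            ENNReal.ofReal ((c * u) ^ q) := (ENNReal.div_le_iff hT0 hTtop).1 hd
      have h3 : ENNReal.ofReal a * (φ x (l * u) / ENNReal.ofReal ((l * u) ^ q)) *
            ENNReal.ofReal ((c * u) ^ q)
          = (ENNReal.ofReal a *
              (ENNReal.ofReal ((c * u) ^ q) / ENNReal.ofReal ((l * u) ^ q))) *
            φ x (l * u) := by
        rw [div_eq_mul_inv, div_eq_mul_inv]; ring
      have hratio : ENNReal.ofReal ((c * u) ^ q) / ENNReal.ofReal ((l * u) ^ q)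
          = ENNReal.ofReal ((c / l) ^ q) := by
        rw [← ENNReal.ofReal_div_of_pos (Real.rpow_pos_of_pos hs q)]
        congr 1
        rw [← Real.div_rpow (by positivity) hs.le]
        congr 1
        exact mul_div_mul_right _ _ h.ne'
      have h4 : (ENNReal.ofReal a *
            (ENNReal.ofReal ((c * u) ^ q) / ENNReal.ofReal ((l * u) ^ q))) *
            φ x (l * u) ≤ C * φ x (l * u) := by
        refine mul_le_mul_left (mul_le_mul_right ?_ _) _
        rw [hratio]
        exact ENNReal.ofReal_le_ofReal (le_max_right _ _)
      exact h2.trans (h3.le.trans h4)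
  have hmeas_l : Measurable fun x => φ x (l * |f x|) := by
    have := hφ.1.2 (fun x => l * f x) (measurable_const.mul hf.1)
    simpa [abs_mul, abs_of_pos hl] using this
  have hfin' : ∫⁻ x, φ x (l * |f x|) < ∞ := by
    have : phiModular volume φ (fun x => l * f x) = ∫⁻ x, φ x (l * |f x|) := by
      simp [phiModular, abs_mul, abs_of_pos hl]
    rw [← this]; exact hfin
  have hint : (∫⁻ x, φ x (c * |f x|)) ≠ ∞ := by
    have h1 : (∫⁻ x, φ x (c * |f x|)) ≤ ∫⁻ x, C * φ x (l * |f x|) :=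
      lintegral_mono_ae hbound
    have h2 : (∫⁻ x, C * φ x (l * |f x|)) = C * ∫⁻ x, φ x (l * |f x|) :=
      lintegral_const_mul C hmeas_l
    exact (h1.trans_lt (h2.trans_lt (ENNReal.mul_lt_top hCtop.lt_top hfin'))).ne
  obtain ⟨δ', hδ'pos, hδ'⟩ :=
    exists_pos_setLIntegral_lt_of_measure_lt (μ := volume) hint one_ne_zero
  obtain ⟨r, hr0, hrδ⟩ := ENNReal.lt_iff_exists_nnreal_btwn.1 hδ'pos
  have hr0' : (0:ℝ) < (r:ℝ) := by exact_mod_cast ENNReal.coe_pos.1 hr0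
  refine ⟨(r:ℝ), hr0', fun A hA hAlt => ?_⟩
  have hAlt' : volume A < δ' := by
    rw [ENNReal.ofReal_coe_nnreal] at hAlt
    exact hAlt.trans hrδ
  have hsmall : (∫⁻ x in A, φ x (c * |f x|)) < 1 := hδ' A hAlt'
  have habs : ∀ x : ℝ, |x / (ε / 2)| = c * |x| := by
    intro x
    rw [abs_div, abs_of_pos (half_pos hε), hcdef]
    field_simp
  have hmem : ε / 2 ∈ {ll : ℝ | 0 < ll ∧
      phiModular (volume.restrict A) φ (fun x => f x / ll) ≤ 1} := by
    refine ⟨half_pos hε, ?_⟩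
    have : phiModular (volume.restrict A) φ (fun x => f x / (ε / 2))
        = ∫⁻ x in A, φ x (c * |f x|) := by
      simp only [phiModular, habs]
    rw [this]
    exact hsmall.le
  have hbdd : BddBelow {ll : ℝ | 0 < ll ∧
      phiModular (volume.restrict A) φ (fun x => f x / ll) ≤ 1} :=
    ⟨0, fun y hy => hy.1.le⟩
  have : phiNorm (volume.restrict A) φ f ≤ ε / 2 := csInf_le hbdd hmem
  exact this.trans_lt (half_lt_self hε)

end
end

section
/- Let f ∈ L¹_loc(ℝⁿ). For almost every x ∈ ℝⁿ, if 0 ∈ 𝓡f(x) then Mf(x) = |f(x)|. -/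
open MeasureTheory Metric Filter Topology Set ENNReal

noncomputable section

variable {n : ℕ}

lemma restrict_ball_eq_closedBall {m : ℕ} (x : EuclideanSpace ℝ (Fin m)) {r : ℝ} (hr : 0 < r) :
    (volume : Measure (EuclideanSpace ℝ (Fin m))).restrict (ball x r)
      = volume.restrict (closedBall x r) := by
  apply Measure.restrict_congr_set
  rw [Filter.eventuallyEq_set]
  have hs : volume (sphere x r) = 0 :=
    MeasureTheory.Measure.addHaar_sphere_of_ne_zero volume x hr.ne'
  filter_upwards [measure_eq_zero_iff_ae_notMem.1 hs] with y hy
  simp only [mem_ball, mem_closedBall, mem_sphere, ne_eq] at hy ⊢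
  constructor
  · exact fun h => h.le
  · exact fun h => lt_of_le_of_ne h hy

theorem stmt6 {n : ℕ} (f : EuclideanSpace ℝ (Fin n) → ℝ)
    (hf : LocallyIntegrable f volume) :
    ∀ᵐ x ∂(volume : Measure (EuclideanSpace ℝ (Fin n))),
      (0 : ℝ) ∈ RSet f x → maxFun f x = |f x| := by
  have hfn : LocallyIntegrable (fun y => |f y|) volume := by
    have := (locallyIntegrableOn_univ.2 hf).norm
    simpa [Real.norm_eq_abs, locallyIntegrableOn_univ] using this
  filter_upwards [IsUnifLocDoublingMeasure.ae_tendsto_average volume hfn 1] with x hx h0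
  obtain ⟨-, rk, hrk, hlim, havg⟩ := h0
  have hδ : Tendsto rk atTop (𝓝[>] 0) :=
    tendsto_nhdsWithin_of_tendsto_nhds_of_eventually_within _ hlim
      (Filter.Eventually.of_forall fun k => hrk k)
  have h1 : Tendsto (fun k => ⨍ y in closedBall x (rk k), |f y|) atTop (𝓝 |f x|) :=
    hx (fun _ => x) rk hδ (Filter.Eventually.of_forall fun k => by
      simp [(le_of_lt (hrk k) : (0:ℝ) ≤ rk k)])
  have h2 : (fun k => ⨍ y in ball x (rk k), |f y|)
      = fun k => ⨍ y in closedBall x (rk k), |f y| := by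
    funext k
    rw [restrict_ball_eq_closedBall x (hrk k)]
  rw [h2] at havg
  exact tendsto_nhds_unique havg h1

end
end

section
/- Let φ be a weak Φ-function on ℝⁿ satisfying (A0) and (aDec). Let f ∈ L^φ(ℝⁿ), f ≠ 0, let R > 0, set R₀ = sup{r : ∃ x ∈ B(0,R), r ∈ 𝓡f(x)}, and let 𝕽 > R₀ + R. If g ∈ L¹_loc(ℝⁿ) satisfies g = f a.e. on B(0,𝕽) and |g| ≤ |f| a.e. on ℝⁿ \ B(0,𝕽), then 𝓡f(x) = 𝓡g(x) and Mf(x) = Mg(x) for all x ∈ B(0,R). -/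
open MeasureTheory Metric Filter Topology Set ENNReal

noncomputable section

variable {n : ℕ}

-- ===== auxiliary lemmas =====


section AuxGeneral
variable {α : Type*} [MeasurableSpace α] {μ : Measure α}

lemma modular_scale (φ : α → ℝ → ℝ≥0∞)
    (hm : ∀ᵐ x ∂μ, φ x 0 = 0 ∧ MonotoneOn (φ x) (Set.Ici 0))
    {q a : ℝ} (hq : 0 < q) (hdec : ADec μ φ q a)
    (f : α → ℝ) {c l : ℝ} (hc : 0 < c) (hl : 0 < l)
    (hfin : ∫⁻ x, φ x (l * |f x|) ∂μ < ∞) : ∫⁻ x, φ x (c * |f x|) ∂μ < ∞ := by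
  obtain ⟨ha1, hdecae⟩ := hdec
  set k := c / l with hkdef
  have hkpos : 0 < k := div_pos hc hl
  rcases le_or_gt k 1 with hkle | hkgt
  · refine lt_of_le_of_lt (lintegral_mono_ae ?_) hfin
    filter_upwards [hm] with x hx
    have h1 : c * |f x| ≤ l * |f x| := by
      have := abs_nonneg (f x)
      nlinarith [((div_le_one hl).1 hkle : c ≤ l)]
    exact hx.2 (Set.mem_Ici.2 (mul_nonneg hc.le (abs_nonneg _)))
      (Set.mem_Ici.2 (mul_nonneg hl.le (abs_nonneg _))) h1
  · have hpt : ∀ᵐ x ∂μ, φ x (c * |f x|) ≤ ENNReal.ofReal (a * k ^ q) * φ x (l * |f x|) := by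
      filter_upwards [hm, hdecae] with x hx hxd
      rcases eq_or_lt_of_le (abs_nonneg (f x)) with hf0 | hfpos
      · rw [← hf0, mul_zero, mul_zero, hx.1]
        exact zero_le
      · set u := l * |f x| with hu
        have hupos : 0 < u := mul_pos hl hfpos
        have htu : c * |f x| = k * u := by rw [hu, hkdef]; field_simp
        have hlt : u < k * u := by nlinarith
        have hd := hxd u (k * u) hupos hlt
        have htq : ((k * u) ^ q : ℝ) = k ^ q * u ^ q := Real.mul_rpow hkpos.le hupos.le
        have huq0 : ENNReal.ofReal (u ^ q) ≠ 0 := by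
          simp only [ne_eq, ENNReal.ofReal_eq_zero, not_le]
          exact Real.rpow_pos_of_pos hupos q
        have huqt : ENNReal.ofReal (u ^ q) ≠ ∞ := ENNReal.ofReal_ne_top
        have hkuq0 : ENNReal.ofReal ((k * u) ^ q) ≠ 0 := by
          simp only [ne_eq, ENNReal.ofReal_eq_zero, not_le]
          exact Real.rpow_pos_of_pos (mul_pos hkpos hupos) q
        have hkuqt : ENNReal.ofReal ((k * u) ^ q) ≠ ∞ := ENNReal.ofReal_ne_top
        calc φ x (c * |f x|) = φ x (k * u) := by rw [htu]
          _ = φ x (k * u) / ENNReal.ofReal ((k*u) ^ q) * ENNReal.ofReal ((k*u) ^ q) :=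
              (ENNReal.div_mul_cancel hkuq0 hkuqt).symm
          _ ≤ ENNReal.ofReal a * (φ x u / ENNReal.ofReal (u ^ q)) * ENNReal.ofReal ((k*u) ^ q) := by
              gcongr
          _ = (ENNReal.ofReal a * ENNReal.ofReal (k ^ q)) *
                (φ x u / ENNReal.ofReal (u ^ q) * ENNReal.ofReal (u ^ q)) := by
              rw [htq, ENNReal.ofReal_mul (Real.rpow_nonneg hkpos.le q)]; ring
          _ = ENNReal.ofReal (a * k ^ q) * φ x u := by
              rw [ENNReal.div_mul_cancel huq0 huqt,
                ENNReal.ofReal_mul (by linarith : (0:ℝ) ≤ a)]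
    calc ∫⁻ x, φ x (c * |f x|) ∂μ ≤ ∫⁻ x, ENNReal.ofReal (a * k ^ q) * φ x (l * |f x|) ∂μ :=
          lintegral_mono_ae hpt
      _ = ENNReal.ofReal (a * k ^ q) * ∫⁻ x, φ x (l * |f x|) ∂μ :=
          lintegral_const_mul' _ _ ENNReal.ofReal_ne_top
      _ < ∞ := ENNReal.mul_lt_top ENNReal.ofReal_lt_top hfin

lemma pt_lower (φ : α → ℝ → ℝ≥0∞) {β aI : ℝ} (hβ : 0 < β)
    (hA0ae : ∀ᵐ x ∂μ, φ x β ≤ 1 ∧ 1 ≤ φ x (1/β))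
    (hinc : AInc μ φ 1 aI) :
    ∀ᵐ x ∂μ, ∀ u : ℝ, 0 ≤ u →
      ENNReal.ofReal u ≤ ENNReal.ofReal (1/β) + ENNReal.ofReal (aI/β) * φ x u := by
  obtain ⟨haI, hincae⟩ := hinc
  filter_upwards [hA0ae, hincae] with x hx hxinc
  intro u hu
  rcases le_or_gt u (1/β) with hub | hub
  · exact le_trans (ENNReal.ofReal_le_ofReal hub) le_self_add
  · have h1β : (0:ℝ) < 1/β := one_div_pos.2 hβ
    have hupos : (0:ℝ) < u := lt_trans h1β hub
    have hkey := hxinc (1/β) u h1β hub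
    rw [Real.rpow_one, Real.rpow_one] at hkey
    have hstep : ENNReal.ofReal β ≤ ENNReal.ofReal aI * (φ x u / ENNReal.ofReal u) := by
      refine le_trans ?_ hkey
      rw [ENNReal.le_div_iff_mul_le (Or.inl ?_) (Or.inl ENNReal.ofReal_ne_top)]
      · calc ENNReal.ofReal β * ENNReal.ofReal (1/β) = ENNReal.ofReal (β * (1/β)) :=
              (ENNReal.ofReal_mul hβ.le).symm
          _ = 1 := by rw [mul_one_div_cancel hβ.ne', ENNReal.ofReal_one]
          _ ≤ φ x (1/β) := hx.2
      · simp only [ne_eq, ENNReal.ofReal_eq_zero, not_le]; exact h1β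
    have hu0 : ENNReal.ofReal u ≠ 0 := by
      simp only [ne_eq, ENNReal.ofReal_eq_zero, not_le]; exact hupos
    have hstep2 : ENNReal.ofReal β * ENNReal.ofReal u ≤ ENNReal.ofReal aI * φ x u := by
      calc ENNReal.ofReal β * ENNReal.ofReal u
          ≤ ENNReal.ofReal aI * (φ x u / ENNReal.ofReal u) * ENNReal.ofReal u := by gcongr
        _ = ENNReal.ofReal aI * φ x u := by
            rw [mul_assoc, ENNReal.div_mul_cancel hu0 ENNReal.ofReal_ne_top]
    have hfinal : ENNReal.ofReal u ≤ ENNReal.ofReal (aI/β) * φ x u := by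
      have hβ0 : ENNReal.ofReal β ≠ 0 := by
        simp only [ne_eq, ENNReal.ofReal_eq_zero, not_le]; exact hβ
      calc ENNReal.ofReal u = (ENNReal.ofReal β)⁻¹ * (ENNReal.ofReal β * ENNReal.ofReal u) := by
            rw [← mul_assoc, ENNReal.inv_mul_cancel hβ0 ENNReal.ofReal_ne_top, one_mul]
        _ ≤ (ENNReal.ofReal β)⁻¹ * (ENNReal.ofReal aI * φ x u) := by gcongr
        _ = ENNReal.ofReal (aI/β) * φ x u := by
            rw [← mul_assoc, ← ENNReal.ofReal_inv_of_pos hβ,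
              ← ENNReal.ofReal_mul (inv_nonneg.2 hβ.le), ← div_eq_inv_mul]
    exact le_trans hfinal le_add_self

end AuxGeneral

section AuxEuclidean
variable {n : ℕ}
local notation "E" => EuclideanSpace ℝ (Fin n)

def avgB (h : E → ℝ) (x : E) (r : ℝ) : ℝ := ⨍ y in ball x r, |h y|

lemma maxFun_eq (h : E → ℝ) (x : E) :
    maxFun h x = ⨆ r : {r : ℝ // 0 < r}, avgB h x r.1 := rfl

lemma mem_RSet {h : E → ℝ} {x : E} {r : ℝ} : r ∈ RSet h x ↔
    0 ≤ r ∧ ∃ rk : ℕ → ℝ, (∀ k, 0 < rk k) ∧ Tendsto rk atTop (𝓝 r) ∧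
      Tendsto (fun k => avgB h x (rk k)) atTop (𝓝 (maxFun h x)) := Iff.rfl

lemma abs_integrableOn' {h : E → ℝ} {s : Set E} (hi : IntegrableOn h s volume) :
    IntegrableOn (fun y => |h y|) s volume := by
  have := hi.norm; simp only [Real.norm_eq_abs] at this; exact this

lemma locInt_ball {h : E → ℝ} (hi : LocallyIntegrable h volume) (x : E) (r : ℝ) :
    IntegrableOn h (ball x r) volume :=
  (hi.integrableOn_isCompact (isCompact_closedBall x r)).mono_set ball_subset_closedBall

lemma avgB_nonneg (h : E → ℝ) (x : E) (r : ℝ) : 0 ≤ avgB h x r := by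
  rw [avgB, setAverage_eq]
  exact smul_nonneg (inv_nonneg.2 ENNReal.toReal_nonneg) (integral_nonneg fun y => abs_nonneg _)

lemma avgB_eq_div (h : E → ℝ) (x : E) (r : ℝ) :
    avgB h x r = (∫ y in ball x r, |h y|) / (volume (ball x r)).toReal := by
  rw [avgB, setAverage_eq, smul_eq_mul, inv_mul_eq_div, measureReal_def]

lemma avgB_congr' {h1 h2 : E → ℝ} {x : E} {r : ℝ}
    (hae : ∀ᵐ y ∂(volume : Measure E), y ∈ ball x r → h1 y = h2 y) :
    avgB h1 x r = avgB h2 x r := by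
  refine setAverage_congr_fun measurableSet_ball ?_
  filter_upwards [hae] with y hy hmem
  rw [hy hmem]

lemma integral_ball_mono_fn {h1 h2 : E → ℝ} {x : E} {r : ℝ}
    (h2i : IntegrableOn h2 (ball x r) volume) (h1i : IntegrableOn h1 (ball x r) volume)
    (hle : ∀ᵐ y ∂(volume : Measure E), |h1 y| ≤ |h2 y|) :
    (∫ y in ball x r, |h1 y|) ≤ ∫ y in ball x r, |h2 y| :=
  integral_mono_ae (abs_integrableOn' h1i) (abs_integrableOn' h2i) (ae_restrict_of_ae hle)

lemma avgB_mono_fn {h1 h2 : E → ℝ} {x : E} {r : ℝ}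
    (h2i : IntegrableOn h2 (ball x r) volume) (h1i : IntegrableOn h1 (ball x r) volume)
    (hle : ∀ᵐ y ∂(volume : Measure E), |h1 y| ≤ |h2 y|) :
    avgB h1 x r ≤ avgB h2 x r := by
  rw [avgB_eq_div, avgB_eq_div]
  gcongr ?_ / _
  exact integral_ball_mono_fn h2i h1i hle

lemma integral_ball_mono_radius {h : E → ℝ} (hi : LocallyIntegrable h volume) (x : E) {s t : ℝ}
    (hst : s ≤ t) : (∫ y in ball x s, |h y|) ≤ ∫ y in ball x t, |h y| :=
  setIntegral_mono_set (abs_integrableOn' (locInt_ball hi x t))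
    (Eventually.of_forall fun y => abs_nonneg _)
    (HasSubset.Subset.eventuallyLE (ball_subset_ball hst))

lemma vol_ball_toReal (x : E) {r : ℝ} (hr : 0 < r) :
    (volume (ball x r)).toReal = r ^ n * (volume (ball (0:E) 1)).toReal := by
  rw [Measure.addHaar_ball_of_pos volume x hr, finrank_euclideanSpace_fin, ENNReal.toReal_mul,
    ENNReal.toReal_ofReal (by positivity)]

lemma vol_ball_toReal_pos (x : E) {r : ℝ} (hr : 0 < r) : 0 < (volume (ball x r)).toReal :=
  ENNReal.toReal_pos (measure_ball_pos volume x hr).ne' measure_ball_lt_top.ne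

lemma tendsto_integral_ball {h : E → ℝ} (hi : LocallyIntegrable h volume) (x : E) {r : ℝ}
    (hr : 0 < r) {rk : ℕ → ℝ} (hrk : Tendsto rk atTop (𝓝 r)) :
    Tendsto (fun k => ∫ y in ball x (rk k), |h y|) atTop (𝓝 (∫ y in ball x r, |h y|)) := by
  have habs : AEStronglyMeasurable (fun y : E => |h y|) volume := by
    simpa only [Real.norm_eq_abs] using hi.aestronglyMeasurable.norm
  have key : Tendsto (fun k => ∫ y, (ball x (rk k)).indicator (fun y => |h y|) y)
      atTop (𝓝 (∫ y, (ball x r).indicator (fun y => |h y|) y)) := by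
    refine tendsto_integral_filter_of_dominated_convergence
      ((ball x (r+1)).indicator (fun y => |h y|)) ?_ ?_ ?_ ?_
    · exact Eventually.of_forall fun k => habs.indicator measurableSet_ball
    · filter_upwards [hrk.eventually_le_const (by linarith : r < r + 1)] with k hk
      refine Eventually.of_forall fun y => ?_
      by_cases hy : y ∈ ball x (rk k)
      · rw [indicator_of_mem hy, Real.norm_eq_abs, abs_abs,
          indicator_of_mem (mem_ball.2 (lt_of_lt_of_le (mem_ball.1 hy) hk))]
      · rw [indicator_of_notMem hy, norm_zero]
        exact indicator_apply_nonneg fun _ => abs_nonneg _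
    · exact (abs_integrableOn' ((hi.integrableOn_isCompact (isCompact_closedBall x (r+1))).mono_set
        ball_subset_closedBall)).integrable_indicator measurableSet_ball
    · have hsph : (volume : Measure E) (sphere x r) = 0 :=
        Measure.addHaar_sphere_of_ne_zero volume x hr.ne'
      filter_upwards [measure_eq_zero_iff_ae_notMem.1 hsph] with y hy
      rcases lt_or_gt_of_ne (fun hd => hy (mem_sphere.2 hd)) with hlt | hgt
      · rw [indicator_of_mem (mem_ball.2 hlt)]
        refine Tendsto.congr' ?_ (tendsto_const_nhds (x := |h y|))
        filter_upwards [hrk.eventually_const_lt hlt] with k hk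
        rw [indicator_of_mem (mem_ball.2 hk)]
      · rw [indicator_of_notMem (fun hmem => absurd (mem_ball.1 hmem) (not_lt.2 hgt.le))]
        refine Tendsto.congr' ?_ (tendsto_const_nhds (x := (0:ℝ)))
        filter_upwards [hrk.eventually_lt_const hgt] with k hk
        rw [indicator_of_notMem (fun hmem => absurd (mem_ball.1 hmem) (not_lt.2 hk.le))]
  simpa only [integral_indicator measurableSet_ball] using key

lemma tendsto_vol_ball (x : E) {r : ℝ} (hr : 0 < r) {rk : ℕ → ℝ}
    (hrk : Tendsto rk atTop (𝓝 r)) :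
    Tendsto (fun k => (volume (ball x (rk k))).toReal) atTop
      (𝓝 ((volume (ball x r)).toReal)) := by
  rw [vol_ball_toReal x hr]
  refine Tendsto.congr' ?_ ((hrk.pow n).mul_const _)
  filter_upwards [hrk.eventually_const_lt (by linarith : (0:ℝ) < r)] with k hk
  rw [vol_ball_toReal x hk]

lemma avgB_tendsto {h : E → ℝ} (hi : LocallyIntegrable h volume) (x : E) {r : ℝ}
    (hr : 0 < r) {rk : ℕ → ℝ} (hrk : Tendsto rk atTop (𝓝 r)) :
    Tendsto (fun k => avgB h x (rk k)) atTop (𝓝 (avgB h x r)) := by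
  simp only [avgB_eq_div]
  exact (tendsto_integral_ball hi x hr hrk).div (tendsto_vol_ball x hr hrk)
    (vol_ball_toReal_pos x hr).ne'

lemma exists_pos_integral {f : E → ℝ} (hfm : Measurable f) (hloc : LocallyIntegrable f volume)
    (hf0 : ¬ f =ᵐ[(volume : Measure E)] 0) : ∃ N : ℕ, 0 < ∫ y in ball (0:E) (N+1), |f y| := by
  by_contra hcon
  push_neg at hcon
  apply hf0
  have hsm : MeasurableSet {y : E | f y ≠ 0} := (hfm (measurableSet_singleton 0)).compl
  have hnull : ∀ N : ℕ, (volume : Measure E) ({y | f y ≠ 0} ∩ ball (0:E) (N+1)) = 0 := by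
    intro N
    have hint : IntegrableOn (fun y => |f y|) (ball (0:E) (N+1)) volume :=
      abs_integrableOn' (locInt_ball hloc _ _)
    have hz : ∫ y in ball (0:E) (N+1), |f y| = 0 :=
      le_antisymm (hcon N) (integral_nonneg fun y => abs_nonneg _)
    have h1 := (integral_eq_zero_iff_of_nonneg (fun y => abs_nonneg (f y)) hint).1 hz
    have h2 : ∀ᵐ y ∂(volume.restrict (ball (0:E) (N+1))), f y = 0 := by
      filter_upwards [h1] with y hy
      exact abs_eq_zero.1 hy
    have h4 := ae_iff.1 h2
    rw [Measure.restrict_apply (by simpa using hsm)] at h4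
    simpa using h4
  have hcover : {y : E | f y ≠ 0} ⊆ ⋃ N : ℕ, {y : E | f y ≠ 0} ∩ ball (0:E) (N+1) := by
    intro y hy
    obtain ⟨N, hN⟩ := exists_nat_gt (dist y (0:E))
    exact mem_iUnion.2 ⟨N, hy, mem_ball.2 (hN.trans (by linarith))⟩
  have hz : (volume : Measure E) {y | f y ≠ 0} = 0 :=
    le_antisymm ((measure_mono hcover).trans (measure_iUnion_null hnull).le) zero_le
  exact ae_iff.2 (by simpa using hz)

lemma RSet_maxFun_congr {h1 h2 : E → ℝ}
    (hav : ∀ (x : E) (r : ℝ), avgB h1 x r = avgB h2 x r) (x : E) :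
    RSet h1 x = RSet h2 x ∧ maxFun h1 x = maxFun h2 x := by
  have hmax : maxFun h1 x = maxFun h2 x := by
    rw [maxFun_eq, maxFun_eq]
    exact iSup_congr fun ρ => hav x ρ.1
  refine ⟨?_, hmax⟩
  ext r
  rw [mem_RSet, mem_RSet]
  constructor
  · rintro ⟨hr0, rk, hpos, hrk, htd⟩
    exact ⟨hr0, rk, hpos, hrk, by rw [← hmax]; exact htd.congr fun k => hav x (rk k)⟩
  · rintro ⟨hr0, rk, hpos, hrk, htd⟩
    exact ⟨hr0, rk, hpos, hrk, by rw [hmax]; exact htd.congr fun k => (hav x (rk k)).symm⟩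

lemma master (φ : E → ℝ → ℝ≥0∞) (hφ : IsWeakPhi volume φ) (hA0 : A0 volume φ)
    {q a : ℝ} (hq : 1 < q) (hdec : ADec volume φ q a)
    {f : E → ℝ} (hf : MemLphi volume φ f) :
    ∃ β : ℝ, 0 < β ∧ LocallyIntegrable f volume ∧
      ∀ lam : ℝ, 0 < lam → ∃ C : ℝ, 0 ≤ C ∧ ∀ (x : E) (r : ℝ),
        (∫ y in ball x r, |f y|) ≤ (volume (ball x r)).toReal * (lam / β) + C := by
  obtain ⟨⟨hpre1, _hpre2⟩, aI, hinc⟩ := hφ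
  obtain ⟨β, hβ, hβ1, hA0ae⟩ := hA0
  obtain ⟨hfm, l, hl, hmod⟩ := hf
  have hm : ∀ᵐ x ∂(volume : Measure E), φ x 0 = 0 ∧ MonotoneOn (φ x) (Ici 0) :=
    hpre1.mono fun x hx => ⟨hx.1, hx.2.1⟩
  have hlow := pt_lower φ hβ hA0ae hinc
  have hmodl : ∫⁻ x, φ x (l * |f x|) ∂volume < ∞ := by
    have : ∀ x : E, |l * f x| = l * |f x| := fun x => by rw [abs_mul, abs_of_pos hl]
    simpa only [phiModular, this] using hmod
  have hscale : ∀ c : ℝ, 0 < c → ∫⁻ x, φ x (c * |f x|) ∂volume < ∞ := fun c hc =>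
    modular_scale φ hm (lt_trans one_pos hq) hdec f hc hl hmodl
  have hlint : ∀ lam : ℝ, 0 < lam → ∀ (x : E) (r : ℝ),
      (∫⁻ y in ball x r, ENNReal.ofReal |f y|) ≤
        volume (ball x r) * ENNReal.ofReal (lam/β) +
          ENNReal.ofReal (lam*(aI/β)) * ∫⁻ y, φ y (lam⁻¹ * |f y|) := by
    intro lam hlam x r
    have hpt : ∀ᵐ y ∂(volume.restrict (ball x r) : Measure E),
        ENNReal.ofReal |f y| ≤
          ENNReal.ofReal lam * (ENNReal.ofReal (1/β) +
            ENNReal.ofReal (aI/β) * φ y (lam⁻¹ * |f y|)) := by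
      filter_upwards [ae_restrict_of_ae hlow] with y hy
      have h1 : |f y| = lam * (lam⁻¹ * |f y|) := by field_simp
      calc ENNReal.ofReal |f y| = ENNReal.ofReal lam * ENNReal.ofReal (lam⁻¹ * |f y|) := by
            rw [← ENNReal.ofReal_mul hlam.le, ← h1]
        _ ≤ _ := by gcongr; exact hy _ (mul_nonneg (inv_nonneg.2 hlam.le) (abs_nonneg _))
    calc (∫⁻ y in ball x r, ENNReal.ofReal |f y|)
        ≤ ∫⁻ y in ball x r, ENNReal.ofReal lam * (ENNReal.ofReal (1/β) +
            ENNReal.ofReal (aI/β) * φ y (lam⁻¹ * |f y|)) := lintegral_mono_ae hpt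
      _ = ENNReal.ofReal lam * ((∫⁻ y in ball x r, ENNReal.ofReal (1/β)) +
            ∫⁻ y in ball x r, ENNReal.ofReal (aI/β) * φ y (lam⁻¹ * |f y|)) := by
          rw [lintegral_const_mul' _ _ ENNReal.ofReal_ne_top, lintegral_add_left measurable_const]
      _ = ENNReal.ofReal lam * (ENNReal.ofReal (1/β) * volume (ball x r) +
            ENNReal.ofReal (aI/β) * ∫⁻ y in ball x r, φ y (lam⁻¹ * |f y|)) := by
          rw [setLIntegral_const, lintegral_const_mul' _ _ ENNReal.ofReal_ne_top]
      _ ≤ ENNReal.ofReal lam * (ENNReal.ofReal (1/β) * volume (ball x r) +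
            ENNReal.ofReal (aI/β) * ∫⁻ y, φ y (lam⁻¹ * |f y|)) := by
          gcongr
          exact Measure.restrict_le_self
      _ = volume (ball x r) * ENNReal.ofReal (lam/β) +
            ENNReal.ofReal (lam*(aI/β)) * ∫⁻ y, φ y (lam⁻¹ * |f y|) := by
          rw [mul_add, ← mul_assoc, ← mul_assoc, ← ENNReal.ofReal_mul hlam.le,
            ← ENNReal.ofReal_mul hlam.le, mul_one_div, mul_comm (ENNReal.ofReal (lam/β)) _]
  have hfinint : ∀ (x : E) (r : ℝ), (∫⁻ y in ball x r, ENNReal.ofReal |f y|) < ∞ := by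
    intro x r
    refine lt_of_le_of_lt (hlint 1 one_pos x r) (ENNReal.add_lt_top.2 ⟨?_, ?_⟩)
    · exact ENNReal.mul_lt_top measure_ball_lt_top ENNReal.ofReal_lt_top
    · refine ENNReal.mul_lt_top ENNReal.ofReal_lt_top ?_
      simpa using hscale 1 one_pos
  have hion : ∀ (x : E) (r : ℝ), IntegrableOn f (ball x r) volume := by
    intro x r
    refine ⟨hfm.aestronglyMeasurable.restrict, ?_⟩
    rw [hasFiniteIntegral_iff_norm]
    simpa only [Real.norm_eq_abs] using hfinint x r
  have hloc : LocallyIntegrable f volume := fun x =>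
    ⟨ball x 1, ball_mem_nhds x one_pos, hion x 1⟩
  refine ⟨β, hβ, hloc, ?_⟩
  intro lam hlam
  refine ⟨(ENNReal.ofReal (lam*(aI/β)) * ∫⁻ y, φ y (lam⁻¹ * |f y|)).toReal,
    ENNReal.toReal_nonneg, ?_⟩
  intro x r
  have heq : (∫ y in ball x r, |f y|) = (∫⁻ y in ball x r, ENNReal.ofReal |f y|).toReal := by
    rw [integral_eq_lintegral_of_nonneg_ae (Eventually.of_forall fun y => abs_nonneg _)
      (by simpa only [Real.norm_eq_abs] using hfm.aestronglyMeasurable.norm.restrict)]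
  rw [heq]
  have hC2fin : ENNReal.ofReal (lam*(aI/β)) * ∫⁻ y, φ y (lam⁻¹ * |f y|) ≠ ∞ :=
    (ENNReal.mul_lt_top ENNReal.ofReal_lt_top (hscale lam⁻¹ (inv_pos.2 hlam))).ne
  have h1fin : volume (ball x r) * ENNReal.ofReal (lam/β) ≠ ∞ :=
    (ENNReal.mul_lt_top measure_ball_lt_top ENNReal.ofReal_lt_top).ne
  calc (∫⁻ y in ball x r, ENNReal.ofReal |f y|).toReal
      ≤ (volume (ball x r) * ENNReal.ofReal (lam/β) +
          ENNReal.ofReal (lam*(aI/β)) * ∫⁻ y, φ y (lam⁻¹ * |f y|)).toReal :=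
        ENNReal.toReal_mono (by rw [ENNReal.add_ne_top]; exact ⟨h1fin, hC2fin⟩) (hlint lam hlam x r)
    _ = (volume (ball x r)).toReal * (lam / β) +
          (ENNReal.ofReal (lam*(aI/β)) * ∫⁻ y, φ y (lam⁻¹ * |f y|)).toReal := by
        rw [ENNReal.toReal_add h1fin hC2fin, ENNReal.toReal_mul,
          ENNReal.toReal_ofReal (by positivity)]

end AuxEuclidean

theorem stmt10 {n : ℕ} (φ : EuclideanSpace ℝ (Fin n) → ℝ → ℝ≥0∞)
    (hφ : IsWeakPhi volume φ) (hA0 : A0 volume φ)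
    (q a : ℝ) (hq : 1 < q) (hdec : ADec volume φ q a)
    (f : EuclideanSpace ℝ (Fin n) → ℝ) (hf : MemLphi volume φ f)
    (hf0 : ¬ f =ᵐ[volume] 0) (R : ℝ) (hR : 0 < R) (𝕽 : ℝ)
    (h𝕽 : sSup {r : ℝ | ∃ x ∈ ball (0 : EuclideanSpace ℝ (Fin n)) R, r ∈ RSet f x} + R < 𝕽)
    (g : EuclideanSpace ℝ (Fin n) → ℝ) (hg : LocallyIntegrable g volume)
    (hgf : ∀ᵐ x ∂(volume : Measure (EuclideanSpace ℝ (Fin n))),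
      x ∈ ball (0 : EuclideanSpace ℝ (Fin n)) 𝕽 → g x = f x)
    (hgle : ∀ᵐ x ∂(volume : Measure (EuclideanSpace ℝ (Fin n))),
      x ∉ ball (0 : EuclideanSpace ℝ (Fin n)) 𝕽 → |g x| ≤ |f x|) :
    ∀ x ∈ ball (0 : EuclideanSpace ℝ (Fin n)) R,
      RSet f x = RSet g x ∧ maxFun f x = maxFun g x := by
  set S := {r : ℝ | ∃ x ∈ ball (0 : EuclideanSpace ℝ (Fin n)) R, r ∈ RSet f x} with hSdef
  have hSnn : ∀ r ∈ S, 0 ≤ r := by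
    rintro r ⟨x', _, hr⟩
    exact (mem_RSet.1 hr).1
  have hSsupnn : 0 ≤ sSup S := Real.sSup_nonneg hSnn
  have h𝕽R : (0:ℝ) < 𝕽 - R := by simp only [hSdef] at h𝕽; linarith
  rcases Nat.eq_zero_or_pos n with hn | hn
  · -- n = 0 : the space is a single point and g = f a.e.
    haveI : IsEmpty (Fin n) := by subst hn; infer_instance
    have hball : ∀ y : EuclideanSpace ℝ (Fin n),
        y ∈ ball (0 : EuclideanSpace ℝ (Fin n)) 𝕽 := by
      intro y
      have hy0 : dist y (0 : EuclideanSpace ℝ (Fin n)) = 0 := by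
        rw [dist_zero_right, EuclideanSpace.norm_eq]
        simp
      rw [mem_ball, hy0]; linarith
    have hae : ∀ᵐ y ∂(volume : Measure (EuclideanSpace ℝ (Fin n))), g y = f y :=
      hgf.mono fun y hy => hy (hball y)
    have hav : ∀ (x : EuclideanSpace ℝ (Fin n)) (r : ℝ), avgB f x r = avgB g x r := fun x r =>
      avgB_congr' (hae.mono fun y hy _ => hy.symm)
    intro x _
    exact RSet_maxFun_congr hav x
  -- main case n ≥ 1
  obtain ⟨β, hβ, hfloc, hbound⟩ := master φ hφ hA0 hq hdec hf
  have hfm : Measurable f := hf.1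
  obtain ⟨C1, hC10, hb1⟩ := hbound 1 one_pos
  have hv1 : 0 < (volume (ball (0:EuclideanSpace ℝ (Fin n)) 1)).toReal :=
    vol_ball_toReal_pos _ one_pos
  have hvol_eq : ∀ (x : EuclideanSpace ℝ (Fin n)) (r : ℝ),
      (volume (ball x r)).toReal
        = (volume (ball (0:EuclideanSpace ℝ (Fin n)) r)).toReal := fun x r => by
    rw [Measure.addHaar_ball_center]
  have hvol_mono : ∀ {s t : ℝ}, s ≤ t →
      (volume (ball (0:EuclideanSpace ℝ (Fin n)) s)).toReal
        ≤ (volume (ball (0:EuclideanSpace ℝ (Fin n)) t)).toReal := fun h =>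
    ENNReal.toReal_mono measure_ball_lt_top.ne (measure_mono (ball_subset_ball h))
  -- tail bound with scale 1
  have havg_le : ∀ (x : EuclideanSpace ℝ (Fin n)) (r s : ℝ), 0 < s → s ≤ r →
      avgB f x r ≤ 1/β + C1 / (volume (ball (0:EuclideanSpace ℝ (Fin n)) s)).toReal := by
    intro x r s hs hsr
    have hr : 0 < r := hs.trans_le hsr
    have hVr : 0 < (volume (ball x r)).toReal := vol_ball_toReal_pos x hr
    have hVs : 0 < (volume (ball (0:EuclideanSpace ℝ (Fin n)) s)).toReal :=
      vol_ball_toReal_pos _ hs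
    have hVsr : (volume (ball (0:EuclideanSpace ℝ (Fin n)) s)).toReal
        ≤ (volume (ball x r)).toReal := by
      rw [hvol_eq x r]; exact hvol_mono hsr
    rw [avgB_eq_div, div_le_iff₀ hVr]
    have h1 := hb1 x r
    have h2 : C1 ≤ C1 / (volume (ball (0:EuclideanSpace ℝ (Fin n)) s)).toReal *
        (volume (ball x r)).toReal := by
      rw [div_mul_eq_mul_div, le_div_iff₀ hVs]
      exact mul_le_mul_of_nonneg_left hVsr hC10
    have h4 : (1/β + C1 / (volume (ball (0:EuclideanSpace ℝ (Fin n)) s)).toReal) *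
        (volume (ball x r)).toReal = (volume (ball x r)).toReal * (1/β) +
        C1 / (volume (ball (0:EuclideanSpace ℝ (Fin n)) s)).toReal *
        (volume (ball x r)).toReal := by ring
    linarith
  -- uniform decay of averages
  have hdecay : ∀ ε : ℝ, 0 < ε → ∃ T : ℝ, 1 ≤ T ∧
      ∀ (x : EuclideanSpace ℝ (Fin n)) (r : ℝ), T ≤ r → avgB f x r ≤ ε := by
    intro ε hε
    obtain ⟨C, hC0, hbC⟩ := hbound (β * ε / 2) (by positivity)
    refine ⟨max 1 ((2*C/ε + 1)/(volume (ball (0:EuclideanSpace ℝ (Fin n)) 1)).toReal),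
      le_max_left _ _, ?_⟩
    intro x r hTr
    have hr1 : 1 ≤ r := le_trans (le_max_left _ _) hTr
    have hrpos : 0 < r := lt_of_lt_of_le one_pos hr1
    have hVr : 0 < (volume (ball x r)).toReal := vol_ball_toReal_pos x hrpos
    have hlam : β * ε / 2 / β = ε / 2 := by field_simp
    have hbase := hbC x r
    rw [hlam] at hbase
    have hVrform : (volume (ball x r)).toReal
        = r ^ n * (volume (ball (0:EuclideanSpace ℝ (Fin n)) 1)).toReal :=
      vol_ball_toReal x hrpos
    have hrn : r ≤ r ^ n := le_self_pow₀ hr1 hn.ne'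
    have hVrbig : 2*C/ε + 1 ≤ (volume (ball x r)).toReal := by
      have hT2 : (2*C/ε + 1)/(volume (ball (0:EuclideanSpace ℝ (Fin n)) 1)).toReal ≤ r :=
        le_trans (le_max_right _ _) hTr
      rw [div_le_iff₀ hv1] at hT2
      rw [hVrform]
      have hmul : r * (volume (ball (0:EuclideanSpace ℝ (Fin n)) 1)).toReal ≤
          r ^ n * (volume (ball (0:EuclideanSpace ℝ (Fin n)) 1)).toReal :=
        mul_le_mul_of_nonneg_right hrn hv1.le
      linarith
    have hC2 : C ≤ ε/2 * (volume (ball x r)).toReal := by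
      have hεC : ε * (2*C/ε + 1) = 2*C + ε := by field_simp
      nlinarith [mul_le_mul_of_nonneg_left hVrbig hε.le]
    rw [avgB_eq_div, div_le_iff₀ hVr]
    have hsplit : ε * (volume (ball x r)).toReal = (volume (ball x r)).toReal * (ε/2) +
        ε/2 * (volume (ball x r)).toReal := by ring
    linarith
  obtain ⟨N, hN⟩ := exists_pos_integral hfm hfloc hf0
  set δ := ∫ y in ball (0:EuclideanSpace ℝ (Fin n)) (N+1), |f y| with hδdef
  set r₀ : ℝ := (N:ℝ) + 1 + R with hr₀def
  have hr₀pos : 0 < r₀ := by positivity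
  set V₀ := (volume (ball (0:EuclideanSpace ℝ (Fin n)) r₀)).toReal with hV₀def
  have hV₀ : 0 < V₀ := vol_ball_toReal_pos _ hr₀pos
  set m := δ / V₀ with hmdef
  have hm : 0 < m := div_pos hN hV₀
  have hMlow : ∀ x' ∈ ball (0:EuclideanSpace ℝ (Fin n)) R, m ≤ avgB f x' r₀ := by
    intro x' hx'
    have hsubset : ball (0:EuclideanSpace ℝ (Fin n)) ((N:ℝ)+1) ⊆ ball x' r₀ := by
      refine ball_subset_ball' ?_
      have := mem_ball.1 hx'
      rw [dist_comm] at this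
      rw [hr₀def]; linarith
    have hle : δ ≤ ∫ y in ball x' r₀, |f y| := by
      rw [hδdef]
      exact setIntegral_mono_set (abs_integrableOn' (locInt_ball hfloc x' r₀))
        (Eventually.of_forall fun y => abs_nonneg _)
        (HasSubset.Subset.eventuallyLE hsubset)
    rw [avgB_eq_div, hvol_eq x' r₀, ← hV₀def, hmdef]
    gcongr
  obtain ⟨T, hT1, hTd⟩ := hdecay (m/2) (half_pos hm)
  -- positivity of all ball integrals at points with unbounded averages
  have hjunk_pos : ∀ x' : EuclideanSpace ℝ (Fin n),
      ¬ BddAbove (range fun ρ : {ρ : ℝ // 0 < ρ} => avgB f x' ρ.1) →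
      ∀ s : ℝ, 0 < s → 0 < ∫ y in ball x' s, |f y| := by
    intro x' hnb s hs
    have hMs : ∃ ρ : {ρ : ℝ // 0 < ρ},
        max 0 (1/β + C1 / (volume (ball (0:EuclideanSpace ℝ (Fin n)) s)).toReal)
          < avgB f x' ρ.1 := by
      by_contra hcon
      push_neg at hcon
      exact hnb ⟨_, by rintro v ⟨ρ, rfl⟩; exact hcon ρ⟩
    obtain ⟨⟨ρ, hρ⟩, hρgt⟩ := hMs
    have hρs : ρ < s := by
      by_contra hge
      push_neg at hge
      exact absurd (havg_le x' ρ s hs hge) (not_le.2 (lt_of_le_of_lt (le_max_right _ _) hρgt))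
    have havgpos : 0 < avgB f x' ρ := lt_of_le_of_lt (le_max_left _ _) hρgt
    have hintpos : 0 < ∫ y in ball x' ρ, |f y| := by
      rw [avgB_eq_div] at havgpos
      rcases div_pos_iff.1 havgpos with ⟨h1, _⟩ | ⟨_, h2⟩
      · exact h1
      · exact absurd h2 (not_lt.2 (vol_ball_toReal_pos x' hρ).le)
    exact lt_of_lt_of_le hintpos (integral_ball_mono_radius hfloc x' hρs.le)
  -- the optimizing radii over the ball B(0,R) are bounded by T
  have hSbddT : ∀ r' ∈ S, r' ≤ T := by
    rintro r' ⟨x', hx', hr'⟩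
    obtain ⟨hr'0, rk, hrkpos, hrktd, hrkavg⟩ := mem_RSet.1 hr'
    by_contra hgt
    push_neg at hgt
    have hr'pos : 0 < r' := lt_of_lt_of_le (lt_of_lt_of_le one_pos hT1) hgt.le
    by_cases hbdd : BddAbove (range fun ρ : {ρ : ℝ // 0 < ρ} => avgB f x' ρ.1)
    · have hMm : m ≤ maxFun f x' := le_trans (hMlow x' hx')
        (by rw [maxFun_eq]; exact le_ciSup hbdd ⟨r₀, hr₀pos⟩)
      have hev : ∀ᶠ k in atTop, avgB f x' (rk k) ≤ m/2 := by
        filter_upwards [hrktd.eventually_const_lt hgt] with k hk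
        exact hTd x' (rk k) hk.le
      have := le_of_tendsto hrkavg hev
      linarith
    · have h0 : maxFun f x' = 0 := by
        rw [maxFun_eq]; exact Real.iSup_of_not_bddAbove hbdd
      have htd0 : Tendsto (fun k => avgB f x' (rk k)) atTop (𝓝 (avgB f x' r')) :=
        avgB_tendsto hfloc x' hr'pos hrktd
      have heq0 : avgB f x' r' = 0 := tendsto_nhds_unique htd0 (h0 ▸ hrkavg)
      have hpos := hjunk_pos x' hbdd r' hr'pos
      rw [avgB_eq_div, _root_.div_eq_zero_iff] at heq0
      rcases heq0 with h | h
      · linarith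
      · exact absurd h (vol_ball_toReal_pos x' hr'pos).ne'
  have hSb : BddAbove S := ⟨T, hSbddT⟩
  have hSlt : ∀ r' ∈ S, r' < 𝕽 - R := by
    intro r' hr'
    have h1 : r' ≤ sSup S := le_csSup hSb hr'
    simp only [hSdef] at h𝕽
    linarith
  intro x hx
  have hxR : dist x 0 < R := mem_ball.1 hx
  have hsub : ∀ {r : ℝ}, r ≤ 𝕽 - R → ball x r ⊆ ball (0:EuclideanSpace ℝ (Fin n)) 𝕽 :=
    fun {r} hr => ball_subset_ball' (by linarith)
  have haeq : ∀ {r : ℝ}, r ≤ 𝕽 - R → avgB g x r = avgB f x r := fun {r} hr =>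
    avgB_congr' (hgf.mono fun y hy hmem => hy (hsub hr hmem))
  have hglef : ∀ᵐ y ∂(volume : Measure (EuclideanSpace ℝ (Fin n))), |g y| ≤ |f y| := by
    filter_upwards [hgf, hgle] with y h1 h2
    by_cases hy : y ∈ ball (0:EuclideanSpace ℝ (Fin n)) 𝕽
    · rw [h1 hy]
    · exact h2 hy
  have havle : ∀ (x' : EuclideanSpace ℝ (Fin n)) (r : ℝ), avgB g x' r ≤ avgB f x' r :=
    fun x' r => avgB_mono_fn (locInt_ball hfloc x' r) (locInt_ball hg x' r) hglef
  have hinteq : ∀ {r : ℝ}, r ≤ 𝕽 - R →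
      (∫ y in ball x r, |g y|) = ∫ y in ball x r, |f y| := by
    intro r hr
    refine setIntegral_congr_ae measurableSet_ball ?_
    filter_upwards [hgf] with y hy hmem
    rw [hy (hsub hr hmem)]
  by_cases hbdd : BddAbove (range fun ρ : {ρ : ℝ // 0 < ρ} => avgB f x ρ.1)
  · -- bounded (non-degenerate) case
    have hgbdd : BddAbove (range fun ρ : {ρ : ℝ // 0 < ρ} => avgB g x ρ.1) := by
      obtain ⟨b, hb⟩ := hbdd
      exact ⟨b, by rintro v ⟨ρ, rfl⟩; exact (havle x ρ.1).trans (hb ⟨ρ, rfl⟩)⟩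
    have hMm : m ≤ maxFun f x := le_trans (hMlow x hx)
      (by rw [maxFun_eq]; exact le_ciSup hbdd ⟨r₀, hr₀pos⟩)
    have hseq : ∀ k : ℕ, ∃ ρ : {ρ : ℝ // 0 < ρ},
        maxFun f x - min (m/2) (1/((k:ℝ)+1)) < avgB f x ρ.1 := by
      intro k
      have hminpos : 0 < min (m/2) (1/((k:ℝ)+1)) := lt_min (half_pos hm) (by positivity)
      have hlt : maxFun f x - min (m/2) (1/((k:ℝ)+1)) < maxFun f x := by linarith
      rw [maxFun_eq] at hlt
      exact exists_lt_of_lt_ciSup hlt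
    choose rk hrk using hseq
    have hskpos : ∀ k : ℕ, 0 < (rk k).1 := fun k => (rk k).2
    have hskle : ∀ k : ℕ, avgB f x (rk k).1 ≤ maxFun f x := fun k => by
      rw [maxFun_eq]; exact le_ciSup hbdd (rk k)
    have hsklow : ∀ k : ℕ, maxFun f x - 1/((k:ℝ)+1) ≤ avgB f x (rk k).1 := by
      intro k
      have h1 := hrk k
      have h2 : min (m/2) (1/((k:ℝ)+1)) ≤ 1/((k:ℝ)+1) := min_le_right _ _
      linarith
    have htdM : Tendsto (fun k => avgB f x (rk k).1) atTop (𝓝 (maxFun f x)) := by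
      refine tendsto_of_tendsto_of_tendsto_of_le_of_le ?_ tendsto_const_nhds hsklow hskle
      have h10 : Tendsto (fun k : ℕ => maxFun f x - 1/((k:ℝ)+1)) atTop
          (𝓝 (maxFun f x - 0)) :=
        tendsto_const_nhds.sub tendsto_one_div_add_atTop_nhds_zero_nat
      simpa using h10
    have hskT : ∀ k : ℕ, (rk k).1 ≤ T := by
      intro k
      by_contra hT'
      push_neg at hT'
      have h1 := hTd x (rk k).1 hT'.le
      have h2 := hrk k
      have h3 : min (m/2) (1/((k:ℝ)+1)) ≤ m/2 := min_le_left _ _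
      linarith
    obtain ⟨rstar, hrstar, σ, hσ, hσtd⟩ :=
      isCompact_Icc.tendsto_subseq (fun k => ⟨(hskpos k).le, hskT k⟩ :
        ∀ k : ℕ, (rk k).1 ∈ Icc (0:ℝ) T)
    have hsubtd : Tendsto (fun k => avgB f x ((fun j => (rk j).1) (σ k))) atTop
        (𝓝 (maxFun f x)) := htdM.comp hσ.tendsto_atTop
    have hrstarR : rstar ∈ RSet f x :=
      mem_RSet.2 ⟨hrstar.1, (fun j => (rk j).1) ∘ σ, fun k => hskpos _, hσtd, hsubtd⟩
    have hrstarlt : rstar < 𝕽 - R := hSlt _ ⟨x, hx, hrstarR⟩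
    have hgtd : Tendsto (fun k => avgB g x ((rk (σ k)).1)) atTop (𝓝 (maxFun f x)) :=
      hsubtd.congr' (((hσtd.eventually_lt_const hrstarlt)).mono fun k hk => (haeq hk.le).symm)
    have hgM : maxFun g x = maxFun f x := by
      refine le_antisymm ?_ (le_of_tendsto hgtd (Eventually.of_forall fun k => by
        rw [maxFun_eq]; exact le_ciSup hgbdd ⟨(rk (σ k)).1, hskpos _⟩))
      rw [maxFun_eq g x, maxFun_eq f x]
      exact ciSup_le fun ρ => (havle x ρ.1).trans (le_ciSup hbdd ρ)
    refine ⟨?_, hgM.symm⟩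
    ext r
    rw [mem_RSet, mem_RSet, hgM]
    constructor
    · rintro ⟨hr0, tk, htkpos, htk, htdM'⟩
      have hrlt : r < 𝕽 - R := hSlt r ⟨x, hx, mem_RSet.2 ⟨hr0, tk, htkpos, htk, htdM'⟩⟩
      exact ⟨hr0, tk, htkpos, htk,
        htdM'.congr' ((htk.eventually_lt_const hrlt).mono fun k hk => (haeq hk.le).symm)⟩
    · rintro ⟨hr0, tk, htkpos, htk, htdM'⟩
      rcases eq_or_lt_of_le hr0 with hr00 | hrpos
      · refine ⟨hr0, tk, htkpos, htk, ?_⟩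
        have hrlt : r < 𝕽 - R := by rw [← hr00]; exact h𝕽R
        exact htdM'.congr' ((htk.eventually_lt_const hrlt).mono fun k hk => haeq hk.le)
      · have htdg : Tendsto (fun k => avgB g x (tk k)) atTop (𝓝 (avgB g x r)) :=
          avgB_tendsto hg x hrpos htk
        have hgr : avgB g x r = maxFun f x := tendsto_nhds_unique htdg htdM'
        have hfr : avgB f x r = maxFun f x := le_antisymm
          (by rw [maxFun_eq]; exact le_ciSup hbdd ⟨r, hrpos⟩)
          (by rw [← hgr]; exact havle x r)
        exact ⟨hr0, fun _ => r, fun _ => hrpos, tendsto_const_nhds, hfr ▸ tendsto_const_nhds⟩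
  · -- degenerate case : unbounded averages
    have hgnb : ¬ BddAbove (range fun ρ : {ρ : ℝ // 0 < ρ} => avgB g x ρ.1) := by
      rintro ⟨b, hb⟩
      apply hbdd
      refine ⟨max b (1/β + C1 / (volume (ball (0:EuclideanSpace ℝ (Fin n)) (𝕽 - R))).toReal), ?_⟩
      rintro v ⟨ρ, rfl⟩
      show avgB f x ρ.1 ≤ _
      rcases le_or_gt ρ.1 (𝕽 - R) with hρ | hρ
      · rw [← haeq hρ]
        exact le_max_of_le_left (hb ⟨ρ, rfl⟩)
      · exact le_max_of_le_right (havg_le x ρ.1 (𝕽 - R) h𝕽R hρ.le)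
    have hf0' : maxFun f x = 0 := by rw [maxFun_eq]; exact Real.iSup_of_not_bddAbove hbdd
    have hg0' : maxFun g x = 0 := by rw [maxFun_eq]; exact Real.iSup_of_not_bddAbove hgnb
    have hfpos := hjunk_pos x hbdd
    have hgpos : ∀ s : ℝ, 0 < s → 0 < ∫ y in ball x s, |g y| := by
      intro s hs
      have hmin : 0 < min s (𝕽 - R) := lt_min hs h𝕽R
      have h1 : (∫ y in ball x (min s (𝕽 - R)), |g y|) =
          ∫ y in ball x (min s (𝕽 - R)), |f y| := hinteq (min_le_right _ _)
      have h2 : 0 < ∫ y in ball x (min s (𝕽 - R)), |f y| := hfpos _ hmin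
      calc (0:ℝ) < ∫ y in ball x (min s (𝕽 - R)), |g y| := by rw [h1]; exact h2
        _ ≤ ∫ y in ball x s, |g y| := integral_ball_mono_radius hg x (min_le_left _ _)
    refine ⟨?_, by rw [hf0', hg0']⟩
    ext r
    rw [mem_RSet, mem_RSet, hf0', hg0']
    constructor
    · rintro ⟨hr0, tk, htkpos, htk, htd⟩
      rcases eq_or_lt_of_le hr0 with hr00 | hrpos
      · refine ⟨hr0, tk, htkpos, htk, ?_⟩
        have hrlt : r < 𝕽 - R := by rw [← hr00]; exact h𝕽R
        exact htd.congr' ((htk.eventually_lt_const hrlt).mono fun k hk => (haeq hk.le).symm)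
      · exfalso
        have htdf : Tendsto (fun k => avgB f x (tk k)) atTop (𝓝 (avgB f x r)) :=
          avgB_tendsto hfloc x hrpos htk
        have heq0 : avgB f x r = 0 := tendsto_nhds_unique htdf htd
        rw [avgB_eq_div, _root_.div_eq_zero_iff] at heq0
        rcases heq0 with h | h
        · exact absurd h (hfpos r hrpos).ne'
        · exact absurd h (vol_ball_toReal_pos x hrpos).ne'
    · rintro ⟨hr0, tk, htkpos, htk, htd⟩
      rcases eq_or_lt_of_le hr0 with hr00 | hrpos
      · refine ⟨hr0, tk, htkpos, htk, ?_⟩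
        have hrlt : r < 𝕽 - R := by rw [← hr00]; exact h𝕽R
        exact htd.congr' ((htk.eventually_lt_const hrlt).mono fun k hk => haeq hk.le)
      · exfalso
        have htdg : Tendsto (fun k => avgB g x (tk k)) atTop (𝓝 (avgB g x r)) :=
          avgB_tendsto hg x hrpos htk
        have heq0 : avgB g x r = 0 := tendsto_nhds_unique htdg htd
        rw [avgB_eq_div, _root_.div_eq_zero_iff] at heq0
        rcases heq0 with h | h
        · exact absurd h (hgpos r hrpos).ne'
        · exact absurd h (vol_ball_toReal_pos x hrpos).ne'


end
end

section
/- Let φ be a weak Φ-function on a measurable set A ⊆ ℝⁿ of finite measure, satisfying (A0) and (aInc)_p for some 1 ≤ p < ∞. Then L^φ(A) embeds continuously into L^p(A): there is a constant C (depending on |A|, p, and the constants in (A0) and (aInc)_p) with ‖f‖_{L^p(A)} ≤ C ‖f‖_{φ,A} for all f ∈ L^φ(A). -/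
open MeasureTheory Metric Filter Topology Set ENNReal

noncomputable section

variable {n : ℕ}

theorem stmt17 {n : ℕ} (A : Set (EuclideanSpace ℝ (Fin n))) (hA : MeasurableSet A)
    (hAfin : volume A < ∞)
    (φ : EuclideanSpace ℝ (Fin n) → ℝ → ℝ≥0∞) (hφ : IsWeakPhi (volume.restrict A) φ)
    (hA0 : A0 (volume.restrict A) φ)
    (p a : ℝ) (hp : 1 ≤ p) (hinc : AInc (volume.restrict A) φ p a) :
    ∃ C : ℝ, 0 < C ∧ ∀ f : EuclideanSpace ℝ (Fin n) → ℝ,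
      MemLphi (volume.restrict A) φ f →
      eLpNorm f (ENNReal.ofReal p) (volume.restrict A) ≤
        ENNReal.ofReal (C * phiNorm (volume.restrict A) φ f) := by
  obtain ⟨β, hβ0, hβ1, hβae⟩ := hA0
  obtain ⟨ha1, hincae⟩ := hinc
  obtain ⟨⟨hprop, hmeas⟩, -⟩ := hφ
  set μ := volume.restrict A with hμ
  have hp0 : (0:ℝ) < p := lt_of_lt_of_le one_pos hp
  have hc1pos : (0:ℝ) < (1/β) ^ p := Real.rpow_pos_of_pos (by positivity) p
  set M : ℝ := (1/β) ^ p * (volume A).toReal + a * (1/β) ^ p with hM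
  have hMpos : 0 < M := by
    have : (0:ℝ) < a := lt_of_lt_of_le one_pos ha1
    have h2 : 0 ≤ (volume A).toReal := ENNReal.toReal_nonneg
    positivity
  set C : ℝ := M ^ (1/p) with hC
  have hCpos : 0 < C := Real.rpow_pos_of_pos hMpos _
  refine ⟨C, hCpos, ?_⟩
  intro f hf
  obtain ⟨hfm, l0, hl0, hl0fin⟩ := hf
  have hq0 : (ENNReal.ofReal p) ≠ 0 := by
    simp [ENNReal.ofReal_eq_zero, not_le, hp0]
  have hqtop : (ENNReal.ofReal p) ≠ ∞ := ENNReal.ofReal_ne_top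
  have hqt : (ENNReal.ofReal p).toReal = p := ENNReal.toReal_ofReal hp0.le
  -- Key estimate: for each admissible l, eLpNorm f ≤ C * l
  have key : ∀ l : ℝ, 0 < l → phiModular μ φ (fun x => f x / l) ≤ 1 →
      eLpNorm f (ENNReal.ofReal p) μ ≤ ENNReal.ofReal (C * l) := by
    intro l hl hmod
    set g : EuclideanSpace ℝ (Fin n) → ℝ := fun x => f x / l with hg
    have hgm : Measurable g := hfm.div_const l
    -- pointwise a.e. bound
    have hae : ∀ᵐ x ∂μ, (‖g x‖₊ : ℝ≥0∞) ^ p ≤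
        ENNReal.ofReal ((1/β)^p) + ENNReal.ofReal (a * (1/β)^p) * φ x |g x| := by
      filter_upwards [hβae, hincae] with x hx hxinc
      have hnng : (‖g x‖₊ : ℝ≥0∞) = ENNReal.ofReal |g x| := by
        rw [← enorm_eq_nnnorm, ← ofReal_norm, Real.norm_eq_abs]
      rcases le_or_gt |g x| (1/β) with h | h
      · calc (‖g x‖₊ : ℝ≥0∞) ^ p = ENNReal.ofReal (|g x| ^ p) := by
              rw [hnng, ENNReal.ofReal_rpow_of_nonneg (abs_nonneg _) hp0.le]
          _ ≤ ENNReal.ofReal ((1/β)^p) :=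
              ENNReal.ofReal_le_ofReal (Real.rpow_le_rpow (abs_nonneg _) h hp0.le)
          _ ≤ _ := le_self_add
      · have htpos : (0:ℝ) < |g x| := lt_trans (by positivity) h
        have htp_pos : (0:ℝ) < |g x| ^ p := Real.rpow_pos_of_pos htpos p
        have h2 := hxinc (1/β) |g x| (by positivity) h
        have h3 : (ENNReal.ofReal ((1/β)^p))⁻¹ ≤
            ENNReal.ofReal a * (φ x |g x| / ENNReal.ofReal (|g x| ^ p)) := by
          refine le_trans ?_ h2
          rw [← one_div]
          exact ENNReal.div_le_div_right hx.2 _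
        have h4 := mul_le_mul_left h3 (ENNReal.ofReal (|g x| ^ p))
        rw [mul_assoc, ENNReal.div_mul_cancel (ENNReal.ofReal_pos.mpr htp_pos).ne' ENNReal.ofReal_ne_top] at h4
        have h5 := mul_le_mul_right h4 (ENNReal.ofReal ((1/β)^p))
        rw [← mul_assoc, ENNReal.mul_inv_cancel (ENNReal.ofReal_pos.mpr hc1pos).ne' ENNReal.ofReal_ne_top,
          one_mul] at h5
        calc (‖g x‖₊ : ℝ≥0∞) ^ p = ENNReal.ofReal (|g x| ^ p) := by
              rw [hnng, ENNReal.ofReal_rpow_of_nonneg (abs_nonneg _) hp0.le]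
          _ ≤ ENNReal.ofReal ((1/β)^p) * (ENNReal.ofReal a * φ x |g x|) := h5
          _ = ENNReal.ofReal (a * (1/β)^p) * φ x |g x| := by
              rw [← mul_assoc, ← ENNReal.ofReal_mul hc1pos.le, mul_comm ((1/β)^p) a]
          _ ≤ _ := le_add_self
    -- integral bound
    have hint : (∫⁻ x, (‖g x‖₊ : ℝ≥0∞) ^ p ∂μ) ≤ ENNReal.ofReal M := by
      calc (∫⁻ x, (‖g x‖₊ : ℝ≥0∞) ^ p ∂μ)
          ≤ ∫⁻ x, (ENNReal.ofReal ((1/β)^p) + ENNReal.ofReal (a * (1/β)^p) * φ x |g x|) ∂μ :=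
            lintegral_mono_ae hae
        _ = ENNReal.ofReal ((1/β)^p) * μ Set.univ
            + ENNReal.ofReal (a * (1/β)^p) * ∫⁻ x, φ x |g x| ∂μ := by
            rw [lintegral_add_left measurable_const, lintegral_const,
              lintegral_const_mul _ (hmeas g hgm)]
        _ ≤ ENNReal.ofReal ((1/β)^p) * μ Set.univ + ENNReal.ofReal (a * (1/β)^p) * 1 :=
            add_le_add le_rfl (mul_le_mul_right hmod _)
        _ = ENNReal.ofReal M := by
            have huniv : μ Set.univ = volume A := by rw [hμ, Measure.restrict_apply_univ]
            rw [mul_one, huniv, hM, ENNReal.ofReal_add (by positivity)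
              (by have : (0:ℝ) < a := lt_of_lt_of_le one_pos ha1; positivity),
              ENNReal.ofReal_mul hc1pos.le, ENNReal.ofReal_toReal hAfin.ne]
    -- eLpNorm of g
    have hgnorm : eLpNorm g (ENNReal.ofReal p) μ ≤ ENNReal.ofReal C := by
      rw [eLpNorm_eq_lintegral_rpow_enorm_toReal hq0 hqtop, hqt, hC,
        ← ENNReal.ofReal_rpow_of_pos hMpos]
      exact ENNReal.rpow_le_rpow hint (by positivity)
    -- back to f
    have hfeq : f = l • g := by
      funext x
      simp only [hg, Pi.smul_apply, smul_eq_mul]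
      field_simp
    calc eLpNorm f (ENNReal.ofReal p) μ = (‖l‖₊ : ℝ≥0∞) * eLpNorm g (ENNReal.ofReal p) μ := by
          rw [hfeq, eLpNorm_const_smul, enorm_eq_nnnorm]
      _ = ENNReal.ofReal l * eLpNorm g (ENNReal.ofReal p) μ := by
          rw [← enorm_eq_nnnorm, ← ofReal_norm, Real.norm_eq_abs, abs_of_pos hl]
      _ ≤ ENNReal.ofReal l * ENNReal.ofReal C := mul_le_mul_right hgnorm _
      _ = ENNReal.ofReal (C * l) := by rw [← ENNReal.ofReal_mul hl.le, mul_comm]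
  -- the admissible set is nonempty
  have hSne : {l : ℝ | 0 < l ∧ phiModular μ φ (fun x => f x / l) ≤ 1}.Nonempty := by
    set F : ℕ → EuclideanSpace ℝ (Fin n) → ℝ≥0∞ :=
      fun k x => φ x |f x / ((k+1) / l0)| with hF
    have hlk : ∀ k : ℕ, (0:ℝ) < (k+1) / l0 := by
      intro k; positivity
    have hFm : ∀ k, Measurable (F k) := fun k => hmeas _ (hfm.div_const _)
    have hbound : ∀ k, F k ≤ᵐ[μ] fun x => φ x |l0 * f x| := by
      intro k
      filter_upwards [hprop] with x hx
      obtain ⟨h0, hmono, -, -⟩ := hx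
      have harg : |f x / ((k+1) / l0)| ≤ |l0 * f x| := by
        rw [abs_div, abs_mul, abs_of_pos (hlk k), abs_of_pos hl0, div_div_eq_mul_div,
          div_le_iff₀ (by positivity : (0:ℝ) < (k:ℝ)+1)]
        nlinarith [mul_nonneg (mul_nonneg hl0.le (abs_nonneg (f x)))
          (Nat.cast_nonneg k : (0:ℝ) ≤ k)]
      exact hmono (mem_Ici.mpr (abs_nonneg _)) (mem_Ici.mpr (abs_nonneg _)) harg
    have hlim : ∀ᵐ x ∂μ, Tendsto (fun k => F k x) atTop (𝓝 ((fun _ => (0:ℝ≥0∞)) x)) := by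
      filter_upwards [hprop] with x hx
      obtain ⟨h0, hmono, htend, -⟩ := hx
      by_cases hfx : f x = 0
      · simp only [hF, hfx, zero_div, abs_zero, h0]
        exact tendsto_const_nhds
      · have habs : (0:ℝ) < |f x| := abs_pos.mpr hfx
        have heq : ∀ k : ℕ, |f x / ((k+1) / l0)| = |f x| * l0 / (k+1) := by
          intro k
          rw [abs_div, abs_of_pos (hlk k), div_div_eq_mul_div]
        have ht0 : Tendsto (fun k : ℕ => |f x| * l0 / (k+1)) atTop (𝓝[>] 0) := by
          refine tendsto_nhdsWithin_of_tendsto_nhds_of_eventually_within _ ?_ ?_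
          · have hden : Tendsto (fun k : ℕ => (k:ℝ)+1) atTop atTop :=
              tendsto_atTop_add_const_right _ 1 tendsto_natCast_atTop_atTop
            exact Tendsto.div_atTop tendsto_const_nhds hden
          · exact Eventually.of_forall fun k => mem_Ioi.mpr (by positivity)
        have := htend.comp ht0
        refine Tendsto.congr (fun k => ?_) this
        simp only [Function.comp_apply, hF]
        rw [heq k]
    have hDCT := tendsto_lintegral_of_dominated_convergence (μ := μ)
      (fun x => φ x |l0 * f x|) hFm hbound hl0fin.ne hlim
    rw [lintegral_zero] at hDCT
    have hev : ∀ᶠ k in atTop, (∫⁻ x, F k x ∂μ) < 1 :=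
      hDCT.eventually_lt_const (by norm_num)
    obtain ⟨k, hk⟩ := hev.exists
    exact ⟨(k+1) / l0, hlk k, le_of_lt hk⟩
  -- conclude via infimum
  have hN0 : 0 ≤ phiNorm μ φ f := Real.sInf_nonneg (fun l hl => hl.1.le)
  refine ENNReal.le_of_forall_pos_le_add fun ε hε _ => ?_
  have hεC : (0:ℝ) < (ε:ℝ) / C := by positivity
  obtain ⟨l, hlS, hlt⟩ := Real.lt_sInf_add_pos hSne hεC
  calc eLpNorm f (ENNReal.ofReal p) μ ≤ ENNReal.ofReal (C * l) := key l hlS.1 hlS.2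
    _ ≤ ENNReal.ofReal (C * (phiNorm μ φ f + (ε:ℝ) / C)) := by
        apply ENNReal.ofReal_le_ofReal
        exact mul_le_mul_of_nonneg_left hlt.le hCpos.le
    _ = ENNReal.ofReal (C * phiNorm μ φ f + (ε:ℝ)) := by
        rw [mul_add, mul_div_cancel₀ _ hCpos.ne']
    _ ≤ ENNReal.ofReal (C * phiNorm μ φ f) + ENNReal.ofReal (ε:ℝ) := ENNReal.ofReal_add_le
    _ = ENNReal.ofReal (C * phiNorm μ φ f) + ε := by rw [ENNReal.ofReal_coe_nnreal]


end
end
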